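/- Classroom teaching contraction: let w_1^t, …, w_N^t, w* ∈ ℝ^d, α_j^t = η_jγ_t²(2 - η_jγ_t²) ≥ α_min > 0, W^t = (1/N)∑_j α_j^t (w_j^t - w*)(w_j^t - w*)ᵀ with rank(W^t) ≤ k, and let x̂^t be a unit top eigenvector of W^t. If each learner updates w_j^{t+1} = w_j^t - η_jγ_t²⟨w_j^t - w*, x̂^t⟩x̂^t, then (1/N)∑_j ‖w_j^{t+1} - w*‖² ≤ (1 - α_min/k)·(1/N)∑_j ‖w_j^t - w*‖². -/

import Mathlib

open Matrix

/-!
Each learner's update is a damped projection along `x̂`, so its squared distance to `w*` drops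
by exactly `α_j ⟨w_j - w*, x̂⟩²`; averaged over the class, this drop is the quadratic form of
`W` at `x̂`, i.e. its top eigenvalue `λ₁`. Since `W` is positive semidefinite of rank at most `k`,
its trace is a sum of at most `k` nonzero eigenvalues, each at most `λ₁`, so
`λ₁ ≥ tr W / k ≥ α_min · (mean squared distance) / k`.
-/

section

variable {n : Type*} [Fintype n]

theorem dotProduct_sub_smul_self_of_unit (v x : n → ℝ) (hx : x ⬝ᵥ x = 1) (c : ℝ) :
    (v - (c * (v ⬝ᵥ x)) • x) ⬝ᵥ (v - (c * (v ⬝ᵥ x)) • x) =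
      v ⬝ᵥ v - c * (2 - c) * (v ⬝ᵥ x) ^ 2 := by
  simp only [sub_dotProduct, dotProduct_sub, smul_dotProduct, dotProduct_smul, smul_eq_mul, hx,
    dotProduct_comm x v]
  ring

theorem dotProduct_sum_smul_vecMulVec_mulVec {ι : Type*} (s : Finset ι) (a : ι → ℝ)
    (v : ι → n → ℝ) (x : n → ℝ) :
    x ⬝ᵥ ((∑ j ∈ s, a j • vecMulVec (v j) (v j)) *ᵥ x) = ∑ j ∈ s, a j * (v j ⬝ᵥ x) ^ 2 := by
  simp only [sum_mulVec, dotProduct_sum, smul_mulVec, vecMulVec_mulVec, dotProduct_smul,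
    op_smul_eq_smul, smul_eq_mul, dotProduct_comm x (v _)]
  exact Finset.sum_congr rfl fun j _ => by ring

theorem trace_sum_smul_vecMulVec {ι : Type*} (s : Finset ι) (a : ι → ℝ) (v : ι → n → ℝ) :
    (∑ j ∈ s, a j • vecMulVec (v j) (v j)).trace = ∑ j ∈ s, a j * (v j ⬝ᵥ v j) := by
  simp only [trace_sum, trace_smul, trace_vecMulVec, smul_eq_mul]

theorem mul_sum_dotProduct_self_le_trace_sum_smul_vecMulVec {ι : Type*} (s : Finset ι)
    {a : ι → ℝ} {c : ℝ} (hc : ∀ j ∈ s, c ≤ a j) (v : ι → n → ℝ) :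
    c * ∑ j ∈ s, v j ⬝ᵥ v j ≤ (∑ j ∈ s, a j • vecMulVec (v j) (v j)).trace := by
  rw [trace_sum_smul_vecMulVec, Finset.mul_sum]
  exact Finset.sum_le_sum fun j hj =>
    mul_le_mul_of_nonneg_right (hc j hj) (dotProduct_self_star_nonneg (v j))

theorem posSemidef_sum_smul_vecMulVec {ι : Type*} (s : Finset ι) {a : ι → ℝ}
    (ha : ∀ j ∈ s, 0 ≤ a j) (v : ι → n → ℝ) :
    (∑ j ∈ s, a j • vecMulVec (v j) (v j)).PosSemidef :=
  posSemidef_sum s fun j hj => (posSemidef_vecMulVec_self_star (v j)).smul (ha j hj)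

end

namespace Matrix.IsHermitian

variable {n : Type*} [Fintype n] [DecidableEq n] {A : Matrix n n ℝ} {lam : ℝ}

theorem eigenvalues_le_of_forall_dotProduct_mulVec_le (hA : A.IsHermitian)
    (hlam : ∀ x : n → ℝ, x ⬝ᵥ x = 1 → x ⬝ᵥ (A *ᵥ x) ≤ lam) (i : n) :
    hA.eigenvalues i ≤ lam := by
  have hunit : ⇑(hA.eigenvectorBasis i) ⬝ᵥ ⇑(hA.eigenvectorBasis i) = 1 := by
    rw [← star_trivial (⇑(hA.eigenvectorBasis i)), ← EuclideanSpace.inner_eq_star_dotProduct]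
    simp [hA.eigenvectorBasis.orthonormal.1 i]
  simpa [hA.eigenvalues_eq i] using hlam _ hunit

theorem trace_le_rank_mul_of_forall_dotProduct_mulVec_le (hA : A.IsHermitian)
    (hlam : ∀ x : n → ℝ, x ⬝ᵥ x = 1 → x ⬝ᵥ (A *ᵥ x) ≤ lam) :
    A.trace ≤ A.rank * lam :=
  calc A.trace = ∑ i with hA.eigenvalues i ≠ 0, hA.eigenvalues i := by
        rw [hA.trace_eq_sum_eigenvalues, Finset.sum_filter_ne_zero]; rfl
    _ ≤ ∑ i with hA.eigenvalues i ≠ 0, lam :=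
        Finset.sum_le_sum fun i _ => hA.eigenvalues_le_of_forall_dotProduct_mulVec_le hlam i
    _ = A.rank * lam := by
        rw [Finset.sum_const, nsmul_eq_mul, hA.rank_eq_card_non_zero_eigs, Fintype.card_subtype]

end Matrix.IsHermitian

theorem classroom_teaching_contraction_general
    (d N : ℕ)
    (w w' : Fin N → (Fin d → ℝ)) (wstar : Fin d → ℝ)
    (η : Fin N → ℝ) (γ : ℝ)
    (α : Fin N → ℝ) (hα : ∀ j, α j = η j * γ ^ 2 * (2 - η j * γ ^ 2))
    (αmin : ℝ) (hαmin : 0 < αmin) (hαminle : ∀ j, αmin ≤ α j)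
    (W : Matrix (Fin d) (Fin d) ℝ)
    (hW : W = (1 / (N : ℝ)) •
        ∑ j, α j • Matrix.vecMulVec (w j - wstar) (w j - wstar))
    (k : ℕ) (hrank : W.rank ≤ k)
    (xhat : Fin d → ℝ) (hxhat : xhat ⬝ᵥ xhat = 1)
    (hmax : ∀ x : Fin d → ℝ, x ⬝ᵥ x = 1 → x ⬝ᵥ (W *ᵥ x) ≤ xhat ⬝ᵥ (W *ᵥ xhat))
    (hupd : ∀ j, w' j = w j - (η j * γ ^ 2 * ((w j - wstar) ⬝ᵥ xhat)) • xhat) :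
    (1 / (N : ℝ)) * ∑ j, (w' j - wstar) ⬝ᵥ (w' j - wstar) ≤
      (1 - αmin / k) * ((1 / (N : ℝ)) * ∑ j, (w j - wstar) ⬝ᵥ (w j - wstar)) := by
  set v : Fin N → Fin d → ℝ := fun j => w j - wstar
  set lam := xhat ⬝ᵥ (W *ᵥ xhat)
  set S := (1 / (N : ℝ)) * ∑ j, v j ⬝ᵥ v j
  have hWpsd : W.PosSemidef := hW ▸ (posSemidef_sum_smul_vecMulVec _
    (fun j _ => hαmin.le.trans (hαminle j)) v).smul (by positivity)
  have hlam : 0 ≤ lam := by simpa using hWpsd.dotProduct_mulVec_nonneg xhat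
  have hstep : (1 / (N : ℝ)) * ∑ j, (w' j - wstar) ⬝ᵥ (w' j - wstar) = S - lam := by
    have hw' : ∀ j, w' j - wstar = v j - (η j * γ ^ 2 * (v j ⬝ᵥ xhat)) • xhat := fun j => by
      rw [hupd j, sub_right_comm]
    simp only [lam, S, hw', dotProduct_sub_smul_self_of_unit _ _ hxhat, ← hα, hW, smul_mulVec,
      dotProduct_smul, dotProduct_sum_smul_vecMulVec_mulVec, Finset.sum_sub_distrib, smul_eq_mul]
    ring
  have htrace_ge : αmin * S ≤ W.trace := by
    rw [hW, trace_smul, smul_eq_mul, mul_left_comm]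
    exact mul_le_mul_of_nonneg_left
      (mul_sum_dotProduct_self_le_trace_sum_smul_vecMulVec _ (fun j _ => hαminle j) v)
      (by positivity)
  have htrace_le : W.trace ≤ k * lam :=
    (hWpsd.isHermitian.trace_le_rank_mul_of_forall_dotProduct_mulVec_le hmax).trans
      (mul_le_mul_of_nonneg_right (by exact_mod_cast hrank) hlam)
  have hgain : αmin * S / k ≤ lam :=
    div_le_of_le_mul₀ k.cast_nonneg hlam (by linarith [mul_comm lam (k : ℝ)])
  rw [hstep]
  linarith [show (1 - αmin / k) * S = S - αmin * S / k by ring]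

theorem classroom_teaching_contraction
    (d N : ℕ) (hd : 0 < d) (hN : 0 < N)
    (w w' : Fin N → (Fin d → ℝ)) (wstar : Fin d → ℝ)
    (η : Fin N → ℝ) (hη : ∀ j, 0 < η j) (γ : ℝ) (hγ : 0 < γ)
    (α : Fin N → ℝ) (hα : ∀ j, α j = η j * γ ^ 2 * (2 - η j * γ ^ 2))
    (αmin : ℝ) (hαmin : 0 < αmin) (hαminle : ∀ j, αmin ≤ α j)
    (W : Matrix (Fin d) (Fin d) ℝ)
    (hW : W = (1 / (N : ℝ)) •
        ∑ j, α j • Matrix.vecMulVec (w j - wstar) (w j - wstar))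
    (k : ℕ) (hk0 : 0 < k) (hrank : W.rank ≤ k)
    (xhat : Fin d → ℝ) (hxhat : xhat ⬝ᵥ xhat = 1)
    (hmax : ∀ x : Fin d → ℝ, x ⬝ᵥ x = 1 → x ⬝ᵥ (W *ᵥ x) ≤ xhat ⬝ᵥ (W *ᵥ xhat))
    (hupd : ∀ j, w' j = w j - (η j * γ ^ 2 * ((w j - wstar) ⬝ᵥ xhat)) • xhat) :
    (1 / (N : ℝ)) * ∑ j, (w' j - wstar) ⬝ᵥ (w' j - wstar) ≤
      (1 - αmin / k) * ((1 / (N : ℝ)) * ∑ j, (w j - wstar) ⬝ᵥ (w j - wstar)) :=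
  classroom_teaching_contraction_general d N w w' wstar η γ α hα αmin hαmin hαminle W hW k hrank
    xhat hxhat hmax hupd
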